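/- Let N be an odd positive integer, θ ∈ (0, π/2), k ∈ {0, 1, …, 2N−1}, λ_k = exp(πik/N), and C = 2N/(1 + (−1)^k·cos^N θ). Define the 2×2 matrix ρ_k by (ρ_k)_{c,c'} = (1/C)·Σ_{n=0}^{N−1} v_c(n)·conj(v_{c'}(n)), where v_0(n) = a_n(λ_k) and v_1(n) = b_n(λ_k) (this is the reduced density matrix of the coin in the normalized eigenstate with eigenvalue λ_k). Then ρ_k = (1/2)·[[1 + (−1)^k·cos^N θ, (−1)^k·cos^N θ·tanθ], [(−1)^k·cos^N θ·tanθ, 1 − (−1)^k·cos^N θ]]. -/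

import Mathlib

open Complex Finset ComplexConjugate

/-!
Each factor of `a_n` is `conj z / z` with `z = 1 + λω⁻ʲ/cosθ` (as `|λ| = |ω| = 1`), so `|a_n| = 1`
and every entry of `ρ` is a combination of sums `∑ₙ (1 + μ ζⁿ)⁻¹` with `ζ = ω` or `ω⁻¹`. For the
`b b̄` entry this rests on the partial fractions, with `w = λ⁻¹ωⁿ` and `c = cosθ`,
`tan²θ / ((1 + w⁻¹/c)(1 + w/c)) = (1 + c w)⁻¹ - (1 + w/c)⁻¹`.
Expanding each term as a geometric series and summing over `n` first gives
`∑ₙ (1 + μ ζⁿ)⁻¹ = N / (1 + μᴺ)` for odd `N`; since `λᴺ = (-1)ᵏ` squares to `1`, the closed forms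
collapse to the stated matrix.
-/

/-- `ω = exp(2πi/N)`. -/
noncomputable def omegaN (N : ℕ) : ℂ := Complex.exp (2 * Real.pi * Complex.I / N)

/-- `a_n(λ) = ω^(−n(n−1)/2) · ∏_{j=0}^{n−1} (1 + λ⁻¹ωʲ/cosθ)/(1 + λω⁻ʲ/cosθ)`. -/
noncomputable def aCoef (N : ℕ) (θ : ℝ) (lam : ℂ) (n : ℕ) : ℂ :=
  (omegaN N)⁻¹ ^ (n * (n - 1) / 2) *
    ∏ j ∈ Finset.range n,
      (1 + lam⁻¹ * omegaN N ^ j / (Real.cos θ : ℂ)) /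
      (1 + lam * (omegaN N)⁻¹ ^ j / (Real.cos θ : ℂ))

/-- `b_n(λ) = a_n(λ)·tanθ/(1 + λω⁻ⁿ/cosθ)`. -/
noncomputable def bCoef (N : ℕ) (θ : ℝ) (lam : ℂ) (n : ℕ) : ℂ :=
  aCoef N θ lam n * (Real.tan θ : ℂ) / (1 + lam * (omegaN N)⁻¹ ^ n / (Real.cos θ : ℂ))

/-- The reduced density matrix of the coin in the normalized eigenstate with
eigenvalue `λ`: `(ρ)_{c,c'} = (1/C)·Σ_{n<N} v_c(n)·conj(v_{c'}(n))` where
`v_0(n) = a_n(λ)` and `v_1(n) = b_n(λ)`. -/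
noncomputable def coinRho (N : ℕ) (θ : ℝ) (lam : ℂ) (C : ℂ) :
    Matrix (Fin 2) (Fin 2) ℂ := fun c c' =>
  (1 / C) * ∑ n ∈ Finset.range N,
    (if c = 0 then aCoef N θ lam n else bCoef N θ lam n) *
      (starRingEnd ℂ) (if c' = 0 then aCoef N θ lam n else bCoef N θ lam n)

theorem add_ne_zero_of_norm_ne {E : Type*} [SeminormedAddGroup E] {a b : E} (h : ‖a‖ ≠ ‖b‖) :
    a + b ≠ 0 := fun hab => h (by rw [eq_neg_of_add_eq_zero_left hab, norm_neg])

theorem one_add_ne_zero_of_norm_ne_one {z : ℂ} (hz : ‖z‖ ≠ 1) : 1 + z ≠ 0 :=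
  add_ne_zero_of_norm_ne (by rwa [norm_one, ne_comm])

theorem one_add_pow_ne_zero_of_norm_ne_one {z : ℂ} (hz : ‖z‖ ≠ 1) {N : ℕ} (hN : N ≠ 0) :
    1 + z ^ N ≠ 0 :=
  one_add_ne_zero_of_norm_ne_one <| by
    rwa [norm_pow, Ne, pow_eq_one_iff_of_nonneg (norm_nonneg z) hN]

theorem inv_one_add_mul_sub_inv_one_add_div {K : Type*} [Field K] {c w : K} (hc : c ≠ 0)
    (hw : w ≠ 0) (h₁ : 1 + c * w ≠ 0) (h₂ : c + w ≠ 0) :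
    (1 + c * w)⁻¹ - (1 + w / c)⁻¹ = (1 - c ^ 2) / c ^ 2 / ((1 + w⁻¹ / c) * (1 + w / c)) := by
  have h₁' : c * w + 1 ≠ 0 := by rwa [add_comm]
  field_simp
  ring

theorem IsPrimitiveRoot.sum_pow_pow_eq_ite {K : Type*} [Field K] {ζ : K} {N m : ℕ}
    (hζ : IsPrimitiveRoot ζ N) (hm : m < N) :
    ∑ n ∈ range N, (ζ ^ m) ^ n = if m = 0 then (N : K) else 0 := by
  split_ifs with h0
  · simp [h0]
  · have hne : ζ ^ m ≠ 1 := hζ.pow_ne_one_of_pos_of_lt h0 hm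
    rw [geom_sum_eq hne, ← pow_mul, mul_comm, pow_mul, hζ.pow_eq_one, one_pow, sub_self,
      zero_div]

theorem IsPrimitiveRoot.sum_inv_one_sub_mul_pow {K : Type*} [Field K] {ζ x : K} {N : ℕ}
    (hζ : IsPrimitiveRoot ζ N) (hx : x ^ N ≠ 1) :
    ∑ n ∈ range N, (1 - x * ζ ^ n)⁻¹ = N / (1 - x ^ N) := by
  have hxN : 1 - x ^ N ≠ 0 := sub_ne_zero.mpr hx.symm
  -- `(x ζⁿ)^N = x^N` turns each term into a finite geometric series
  have hterm : ∀ n, (1 - x * ζ ^ n)⁻¹ = (∑ m ∈ range N, x ^ m * (ζ ^ m) ^ n) / (1 - x ^ N) := by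
    intro n
    have h := mul_neg_geom_sum (x * ζ ^ n) N
    rw [mul_pow, ← pow_mul, mul_comm n N, pow_mul, hζ.pow_eq_one, one_pow, mul_one] at h
    rw [eq_div_iff hxN, ← h, inv_mul_cancel_left₀]
    · exact sum_congr rfl fun m _ => by ring
    · rintro h0
      rw [h0, zero_mul] at h
      exact hxN h.symm
  rw [sum_congr rfl fun n _ => hterm n, ← sum_div, sum_comm]
  simp_rw [← mul_sum]
  rw [sum_congr rfl fun m hm => by rw [hζ.sum_pow_pow_eq_ite (mem_range.mp hm)]]
  have hN : 0 < N := Nat.pos_of_ne_zero fun h => hx (by rw [h, pow_zero])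
  simp [hN]

theorem IsPrimitiveRoot.sum_inv_one_add_mul_pow_of_odd {K : Type*} [Field K] {ζ μ : K} {N : ℕ}
    (hζ : IsPrimitiveRoot ζ N) (hN : Odd N) (hμ : 1 + μ ^ N ≠ 0) :
    ∑ n ∈ range N, (1 + μ * ζ ^ n)⁻¹ = N / (1 + μ ^ N) := by
  have h := hζ.sum_inv_one_sub_mul_pow (x := -μ)
    (by rw [hN.neg_pow]; intro h; exact hμ (by linear_combination -h))
  simpa only [hN.neg_pow, neg_mul, sub_neg_eq_add] using h

theorem norm_omegaN (N : ℕ) : ‖omegaN N‖ = 1 := by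
  rw [omegaN, show 2 * Real.pi * I / N = ((2 * Real.pi / N : ℝ) : ℂ) * I by push_cast; ring]
  exact norm_exp_ofReal_mul_I _

theorem isPrimitiveRoot_omegaN {N : ℕ} (hN : N ≠ 0) : IsPrimitiveRoot (omegaN N) N :=
  isPrimitiveRoot_exp N hN

theorem norm_div_ofReal_ne_one {z : ℂ} (hz : ‖z‖ = 1) {c : ℝ} (hc : |c| ≠ 1) :
    ‖z / c‖ ≠ 1 := by
  rwa [norm_div, hz, norm_real, Real.norm_eq_abs, one_div, Ne, inv_eq_one]

theorem norm_ofReal_mul_ne_one {z : ℂ} (hz : ‖z‖ = 1) {c : ℝ} (hc : |c| ≠ 1) :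
    ‖c * z‖ ≠ 1 := by
  rwa [norm_mul, hz, mul_one, norm_real, Real.norm_eq_abs]

noncomputable def coinDen (N : ℕ) (θ : ℝ) (lam : ℂ) (n : ℕ) : ℂ :=
  1 + lam * (omegaN N)⁻¹ ^ n / (Real.cos θ : ℂ)

section

variable {N : ℕ} {θ : ℝ} {lam : ℂ}

theorem conj_coinDen (hlam : ‖lam‖ = 1) (n : ℕ) :
    conj (coinDen N θ lam n) = 1 + lam⁻¹ * omegaN N ^ n / (Real.cos θ : ℂ) := by
  simp only [coinDen, map_add, map_one, map_div₀, map_mul, map_pow, map_inv₀, conj_ofReal,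
    ← inv_eq_conj hlam, ← inv_eq_conj (norm_omegaN N), inv_inv]

theorem coinDen_ne_zero (hlam : ‖lam‖ = 1) (hc : |Real.cos θ| ≠ 1) (n : ℕ) :
    coinDen N θ lam n ≠ 0 := by
  refine one_add_ne_zero_of_norm_ne_one (norm_div_ofReal_ne_one ?_ hc)
  rw [norm_mul, norm_pow, norm_inv, norm_omegaN, hlam, inv_one, one_pow, one_mul]

theorem aCoef_eq_prod_conj_div (hlam : ‖lam‖ = 1) (n : ℕ) :
    aCoef N θ lam n = (omegaN N)⁻¹ ^ (n * (n - 1) / 2) *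
      ∏ j ∈ range n, conj (coinDen N θ lam j) / coinDen N θ lam j := by
  simp only [conj_coinDen hlam]
  rfl

theorem norm_aCoef (hlam : ‖lam‖ = 1) (hc : |Real.cos θ| ≠ 1) (n : ℕ) :
    ‖aCoef N θ lam n‖ = 1 := by
  have hfactor (j : ℕ) : ‖conj (coinDen N θ lam j) / coinDen N θ lam j‖ = 1 := by
    rw [norm_div, RCLike.norm_conj, div_self (norm_ne_zero_iff.mpr (coinDen_ne_zero hlam hc j))]
  rw [aCoef_eq_prod_conj_div hlam, norm_mul, norm_prod, prod_eq_one fun j _ => hfactor j,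
    norm_pow, norm_inv, norm_omegaN, inv_one, one_pow, one_mul]

theorem aCoef_mul_conj (hlam : ‖lam‖ = 1) (hc : |Real.cos θ| ≠ 1) (n : ℕ) :
    aCoef N θ lam n * conj (aCoef N θ lam n) = 1 := by
  rw [mul_conj', norm_aCoef hlam hc, ofReal_one, one_pow]

theorem bCoef_eq (n : ℕ) :
    bCoef N θ lam n = aCoef N θ lam n * Real.tan θ / coinDen N θ lam n := rfl

theorem aCoef_mul_conj_bCoef (hlam : ‖lam‖ = 1) (hc : |Real.cos θ| ≠ 1) (n : ℕ) :
    aCoef N θ lam n * conj (bCoef N θ lam n)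
      = Real.tan θ * (1 + lam⁻¹ / Real.cos θ * omegaN N ^ n)⁻¹ := by
  rw [bCoef_eq, map_div₀, map_mul, conj_ofReal, conj_coinDen hlam, ← mul_div_assoc, ← mul_assoc,
    aCoef_mul_conj hlam hc]
  ring

theorem bCoef_mul_conj_aCoef (hlam : ‖lam‖ = 1) (hc : |Real.cos θ| ≠ 1) (n : ℕ) :
    bCoef N θ lam n * conj (aCoef N θ lam n)
      = Real.tan θ * (1 + lam / Real.cos θ * (omegaN N)⁻¹ ^ n)⁻¹ := by
  rw [bCoef_eq, div_mul_eq_mul_div, mul_right_comm, aCoef_mul_conj hlam hc, coinDen]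
  ring

theorem bCoef_mul_conj_bCoef (hlam : ‖lam‖ = 1) (hc₀ : Real.cos θ ≠ 0) (hc₁ : |Real.cos θ| ≠ 1)
    (n : ℕ) :
    bCoef N θ lam n * conj (bCoef N θ lam n)
      = (1 + Real.cos θ * lam⁻¹ * omegaN N ^ n)⁻¹ - (1 + lam⁻¹ / Real.cos θ * omegaN N ^ n)⁻¹ := by
  set c : ℂ := (Real.cos θ : ℂ)
  set w : ℂ := lam⁻¹ * omegaN N ^ n
  have hw : ‖w‖ = 1 := by rw [norm_mul, norm_inv, norm_pow, hlam, norm_omegaN]; simp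
  have hden : coinDen N θ lam n = 1 + w⁻¹ / c := by
    rw [coinDen, mul_inv, inv_inv, inv_pow]
  have htan : (Real.tan θ : ℂ) ^ 2 = (1 - c ^ 2) / c ^ 2 := by
    rw [Real.tan_eq_sin_div_cos, ofReal_div, div_pow, ← ofReal_pow, Real.sin_sq, ofReal_sub,
      ofReal_one, ofReal_pow]
  have hc : c ≠ 0 := ofReal_ne_zero.mpr hc₀
  have h₁ : 1 + c * w ≠ 0 := one_add_ne_zero_of_norm_ne_one (norm_ofReal_mul_ne_one hw hc₁)
  have h₂ : c + w ≠ 0 := fun h => norm_div_ofReal_ne_one hw hc₁ (by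
    rw [eq_neg_of_add_eq_zero_right h, neg_div, div_self hc, norm_neg, norm_one])
  calc bCoef N θ lam n * conj (bCoef N θ lam n)
      = aCoef N θ lam n * conj (aCoef N θ lam n) * (Real.tan θ : ℂ) ^ 2
          / (coinDen N θ lam n * conj (coinDen N θ lam n)) := by
        rw [bCoef_eq, map_div₀, map_mul, conj_ofReal]
        ring
    _ = (1 - c ^ 2) / c ^ 2 / ((1 + w⁻¹ / c) * (1 + w / c)) := by
        rw [aCoef_mul_conj hlam hc₁, one_mul, htan, conj_coinDen hlam, hden, mul_div_assoc]
    _ = (1 + c * w)⁻¹ - (1 + w / c)⁻¹ :=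
        (inv_one_add_mul_sub_inv_one_add_div hc (norm_ne_zero_iff.mp (by simp [hw])) h₁ h₂).symm
    _ = _ := by ring

theorem sum_aCoef_mul_conj_aCoef (hlam : ‖lam‖ = 1) (hc : |Real.cos θ| ≠ 1) :
    ∑ n ∈ range N, aCoef N θ lam n * conj (aCoef N θ lam n) = N := by
  simp [aCoef_mul_conj hlam hc]

theorem sum_aCoef_mul_conj_bCoef (hN : Odd N) (hlam : ‖lam‖ = 1) (hc : |Real.cos θ| ≠ 1) :
    ∑ n ∈ range N, aCoef N θ lam n * conj (bCoef N θ lam n)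
      = Real.tan θ * (N / (1 + (lam⁻¹ / Real.cos θ) ^ N)) := by
  have hμ : ‖lam⁻¹‖ = 1 := by rw [norm_inv, hlam, inv_one]
  rw [sum_congr rfl fun n _ => aCoef_mul_conj_bCoef hlam hc n, ← mul_sum,
    (isPrimitiveRoot_omegaN hN.pos.ne').sum_inv_one_add_mul_pow_of_odd hN
      (one_add_pow_ne_zero_of_norm_ne_one (norm_div_ofReal_ne_one hμ hc) hN.pos.ne')]

theorem sum_bCoef_mul_conj_aCoef (hN : Odd N) (hlam : ‖lam‖ = 1) (hc : |Real.cos θ| ≠ 1) :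
    ∑ n ∈ range N, bCoef N θ lam n * conj (aCoef N θ lam n)
      = Real.tan θ * (N / (1 + (lam / Real.cos θ) ^ N)) := by
  rw [sum_congr rfl fun n _ => bCoef_mul_conj_aCoef hlam hc n, ← mul_sum,
    (isPrimitiveRoot_omegaN hN.pos.ne').inv.sum_inv_one_add_mul_pow_of_odd hN
      (one_add_pow_ne_zero_of_norm_ne_one (norm_div_ofReal_ne_one hlam hc) hN.pos.ne')]

theorem sum_bCoef_mul_conj_bCoef (hN : Odd N) (hlam : ‖lam‖ = 1) (hc₀ : Real.cos θ ≠ 0)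
    (hc₁ : |Real.cos θ| ≠ 1) :
    ∑ n ∈ range N, bCoef N θ lam n * conj (bCoef N θ lam n)
      = N / (1 + (Real.cos θ * lam⁻¹) ^ N) - N / (1 + (lam⁻¹ / Real.cos θ) ^ N) := by
  have hμ : ‖lam⁻¹‖ = 1 := by rw [norm_inv, hlam, inv_one]
  have hω := isPrimitiveRoot_omegaN hN.pos.ne'
  rw [sum_congr rfl fun n _ => bCoef_mul_conj_bCoef hlam hc₀ hc₁ n, sum_sub_distrib,
    hω.sum_inv_one_add_mul_pow_of_odd hN
      (one_add_pow_ne_zero_of_norm_ne_one (norm_ofReal_mul_ne_one hμ hc₁) hN.pos.ne'),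
    hω.sum_inv_one_add_mul_pow_of_odd hN
      (one_add_pow_ne_zero_of_norm_ne_one (norm_div_ofReal_ne_one hμ hc₁) hN.pos.ne')]

end

theorem coinRho_of_pow_eq {N : ℕ} {θ : ℝ} {lam ε : ℂ} (hN : Odd N) (hc₀ : Real.cos θ ≠ 0)
    (hc₁ : |Real.cos θ| ≠ 1) (hlam : lam ^ N = ε) (hε : ε ^ 2 = 1) :
    coinRho N θ lam (2 * N / (1 + ε * (Real.cos θ : ℂ) ^ N))
      = (1 / 2 : ℂ) •
        !![1 + ε * (Real.cos θ : ℂ) ^ N, ε * (Real.cos θ : ℂ) ^ N * (Real.tan θ : ℂ);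
           ε * (Real.cos θ : ℂ) ^ N * (Real.tan θ : ℂ), 1 - ε * (Real.cos θ : ℂ) ^ N] := by
  have hN₀ : N ≠ 0 := hN.pos.ne'
  have hnorm : ‖lam‖ = 1 := by
    have h := congrArg norm (show lam ^ (N * 2) = 1 by rw [pow_mul, hlam, hε])
    rwa [norm_pow, norm_one, pow_eq_one_iff_of_nonneg (norm_nonneg _) (by omega)] at h
  have hε₀ : ε ≠ 0 := by rintro rfl; norm_num at hε
  have hεinv : lam⁻¹ ^ N = ε := by
    rw [inv_pow, hlam, inv_eq_of_mul_eq_one_right (by rw [← sq, hε])]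
  have hP : 1 + ε * (Real.cos θ : ℂ) ^ N ≠ 0 := by
    rw [← hlam, ← mul_pow, mul_comm]
    exact one_add_pow_ne_zero_of_norm_ne_one (norm_ofReal_mul_ne_one hnorm hc₁) hN₀
  have hc : (Real.cos θ : ℂ) ^ N ≠ 0 := pow_ne_zero _ (ofReal_ne_zero.mpr hc₀)
  have hflip : 1 + ε / (Real.cos θ : ℂ) ^ N
      = ε * (1 + ε * (Real.cos θ : ℂ) ^ N) / (Real.cos θ : ℂ) ^ N := by
    field_simp
    linear_combination -(Real.cos θ : ℂ) ^ N * hε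
  ext i j
  fin_cases i <;> fin_cases j <;>
    simp only [coinRho, one_div, inv_div, Fin.zero_eta, Fin.mk_one, Fin.isValue, one_ne_zero,
      if_true, if_false, Matrix.smul_apply, Matrix.of_apply, Matrix.cons_val', Matrix.cons_val_zero,
      Matrix.cons_val_one, Matrix.cons_val_fin_one, smul_eq_mul, div_pow, mul_pow, hεinv, hlam,
      hflip, sum_aCoef_mul_conj_aCoef hnorm hc₁, sum_aCoef_mul_conj_bCoef hN hnorm hc₁,
      sum_bCoef_mul_conj_aCoef hN hnorm hc₁, sum_bCoef_mul_conj_bCoef hN hnorm hc₀ hc₁] <;>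
    field_simp
  · linear_combination -(Real.tan θ : ℂ) * hε
  · linear_combination -(Real.tan θ : ℂ) * hε
  · linear_combination (Real.cos θ : ℂ) ^ N * hε

theorem psw_coin_reduced_density_general (N : ℕ) (hN : Odd N)
    (θ : ℝ) (hθ : θ ∈ Set.Ioo 0 (Real.pi / 2))
    (k : ℕ)
    (lam : ℂ) (hlam : lam = Complex.exp (Real.pi * Complex.I * k / N))
    (C : ℂ) (hC : C = 2 * N / (1 + (-1 : ℂ) ^ k * (Real.cos θ : ℂ) ^ N)) :
    coinRho N θ lam C
      = (1 / 2 : ℂ) •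
        !![1 + (-1 : ℂ) ^ k * (Real.cos θ : ℂ) ^ N,
             (-1 : ℂ) ^ k * (Real.cos θ : ℂ) ^ N * (Real.tan θ : ℂ);
           (-1 : ℂ) ^ k * (Real.cos θ : ℂ) ^ N * (Real.tan θ : ℂ),
             1 - (-1 : ℂ) ^ k * (Real.cos θ : ℂ) ^ N] := by
  have hlamN : lam ^ N = (-1) ^ k := by
    rw [hlam, ← exp_nat_mul, show (N : ℂ) * (Real.pi * I * k / N) = k * (Real.pi * I) by
      field_simp [hN.pos.ne'], exp_nat_mul, exp_pi_mul_I]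
  have hcos₀ : 0 < Real.cos θ := Real.cos_pos_of_mem_Ioo ⟨by linarith [hθ.1, Real.pi_pos], hθ.2⟩
  have hcos₁ : Real.cos θ < 1 := by
    simpa using Real.cos_lt_cos_of_nonneg_of_le_pi_div_two le_rfl hθ.2.le hθ.1
  rw [hC]
  exact coinRho_of_pow_eq hN hcos₀.ne' (by rw [abs_of_pos hcos₀]; exact hcos₁.ne) hlamN
    (by rw [← pow_mul, pow_mul', neg_one_sq, one_pow])

/-- for odd `N`, `θ ∈ (0, π/2)`, `0 ≤ k < 2N`, `λ_k = exp(πik/N)` and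
`C = 2N/(1 + (−1)ᵏcosᴺθ)`, the reduced density matrix of the coin is
`ρ_k = (1/2)·[[1 + (−1)ᵏcosᴺθ, (−1)ᵏcosᴺθ·tanθ], [(−1)ᵏcosᴺθ·tanθ, 1 − (−1)ᵏcosᴺθ]]`. -/
theorem psw_coin_reduced_density (N : ℕ) [NeZero N] (hN : Odd N)
    (θ : ℝ) (hθ : θ ∈ Set.Ioo 0 (Real.pi / 2))
    (k : ℕ) (hk : k < 2 * N)
    (lam : ℂ) (hlam : lam = Complex.exp (Real.pi * Complex.I * k / N))
    (C : ℂ) (hC : C = 2 * N / (1 + (-1 : ℂ) ^ k * (Real.cos θ : ℂ) ^ N)) :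
    coinRho N θ lam C
      = (1 / 2 : ℂ) •
        !![1 + (-1 : ℂ) ^ k * (Real.cos θ : ℂ) ^ N,
             (-1 : ℂ) ^ k * (Real.cos θ : ℂ) ^ N * (Real.tan θ : ℂ);
           (-1 : ℂ) ^ k * (Real.cos θ : ℂ) ^ N * (Real.tan θ : ℂ),
             1 - (-1 : ℂ) ^ k * (Real.cos θ : ℂ) ^ N] :=
  psw_coin_reduced_density_general N hN θ hθ k lam hlam C hC
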